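/- The doubling map φ: Z_6 → Z_12, x ↦ 2x, maps the strong dichotomy consonance set {0,2,3} of Z_6 into a 12-element strong consonance set X₁₂ ⊂ Z_12 containing {0,4,6} such that φ intertwines the respective polarities, i.e., there exist polarities p₆ of the Z_6 dichotomy and p₁₂ of the Z_12 dichotomy with φ ∘ p₆ = p₁₂ ∘ φ, where p_n has the form T^{2^{n−1}}.(4^{⌈n/2⌉}+1) as a map on Z_{2^n·3}. -/
import Mathlib


/-- The doubling map φ : ℤ₆ → ℤ₁₂, x ↦ 2x. -/
def dbl (x : ZMod 6) : ZMod 12 := 2 * (x.val : ZMod 12)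

lemma unit_mem (u : ZMod 12) (hu : IsUnit u) : u = 1 ∨ u = 5 ∨ u = 7 ∨ u = 11 := by
  obtain ⟨w, rfl⟩ := hu
  have h1 : (w : ZMod 12) * ↑w⁻¹ = 1 := by
    rw [← Units.val_mul, mul_inv_cancel, Units.val_one]
  revert h1
  generalize (w : ZMod 12) = a
  generalize ((w⁻¹ : (ZMod 12)ˣ) : ZMod 12) = b
  revert a b
  decide

/-- The doubling map φ : ℤ₆ → ℤ₁₂ maps the strong consonance set {0,2,3} of ℤ₆
into a strong consonance set X₁₂ ⊂ ℤ₁₂ containing {0,4,6}, in such a way that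
φ intertwines the polarities p₁ = T¹.5 on ℤ₆ and p₂ = T².5 on ℤ₁₂
(both of the form T^{2^{n−1}}.(4^{⌈n/2⌉}+1)): φ ∘ p₁ = p₂ ∘ φ, and p₂ is a
polarity of X₁₂. -/
theorem embedding_six_twelve :
    ∃ X₁₂ : Set (ZMod 12),
      ({0,4,6} : Set (ZMod 12)) ⊆ X₁₂ ∧
      X₁₂.ncard = 6 ∧
      -- X₁₂ is the marked set of a strong dichotomy of ℤ₁₂
      (∀ u t : ZMod 12, IsUnit u →
        (fun x => u * x + t) '' X₁₂ = X₁₂ → u = 1 ∧ t = 0) ∧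
      -- with polarity p₂ = T².5
      ((fun x : ZMod 12 => 5 * x + 2) '' X₁₂ = X₁₂ᶜ) ∧
      -- φ maps the ℤ₆-consonances {0,2,3} into X₁₂
      (dbl '' ({0,2,3} : Set (ZMod 6)) ⊆ X₁₂) ∧
      -- and φ intertwines the polarities: φ ∘ p₁ = p₂ ∘ φ
      (∀ x : ZMod 6, dbl (5 * x + 1) = 5 * dbl x + 2) := by
  classical
  refine ⟨(↑({0,1,3,4,6,11} : Finset (ZMod 12)) : Set (ZMod 12)), ?_, ?_, ?_, ?_, ?_, ?_⟩
  · intro x hx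
    simp only [Set.mem_insert_iff, Set.mem_singleton_iff] at hx
    rcases hx with rfl | rfl | rfl <;> decide
  · rw [Set.ncard_coe_finset]; decide
  · intro u t hu h
    have key : ∀ x : ZMod 12, x ∈ ({0,1,3,4,6,11} : Finset (ZMod 12)) →
        u * x + t ∈ ({0,1,3,4,6,11} : Finset (ZMod 12)) := by
      intro x hx
      have : u * x + t ∈ (↑({0,1,3,4,6,11} : Finset (ZMod 12)) : Set (ZMod 12)) := by
        rw [← h]; exact Set.mem_image_of_mem _ (by exact_mod_cast hx)
      exact_mod_cast this
    have hu' := unit_mem u hu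
    clear h hu
    revert key hu'
    revert u t
    decide
  · ext x
    simp only [Set.mem_image, Finset.mem_coe, Set.mem_compl_iff]
    revert x
    decide
  · intro y hy
    simp only [Set.mem_image, Set.mem_insert_iff, Set.mem_singleton_iff] at hy
    obtain ⟨a, ha, rfl⟩ := hy
    rcases ha with rfl | rfl | rfl <;> decide
  · decide
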